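/- Let A be an m×n matrix of rank m over a field, let M be the vector matroid formed by the columns of A, and let (T, f, g) be an extended depth-decomposition of M with Im(g) = {w_1, ..., w_m}. Then the (unique) m×n matrix A' satisfying that the j-th column of A equals Σ_{i=1}^m A'_{ij} w_i for every j has dual tree-depth at most the depth of T. -/

import Mathlib

/-! Infrastructure: rooted trees, depth-decompositions and branch-depth of matroids,
following the definitions of Kardoš, Král', Liebenau, Mach and of the paper
"Optimal matrix tree-depth and a row-invariant parameterized algorithm for
integer programming". -/

/-- A rooted tree on a (nonempty) finite vertex type `V`, given by its root and its
parent function: the parent of the root is the root itself, and from any vertex the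
root is reached by iterating the parent function. -/
structure RTree (V : Type) [Fintype V] [DecidableEq V] where
  root : V
  parent : V → V
  parent_root : parent root = root
  reach : ∀ v : V, ∃ n : ℕ, parent^[n] v = root

namespace RTree

variable {V : Type} [Fintype V] [DecidableEq V]

/-- A vertex is a leaf if it has no children. -/
def IsLeaf (T : RTree V) (v : V) : Prop :=
  ∀ u : V, T.parent u = v → u = v

/-- The non-root vertices on the path from `v` to the root of `T`; they are in bijective
correspondence with the edges of this path (each such vertex corresponds to the edge
joining it to its parent). -/
def pathEdges (T : RTree V) (v : V) : Set V :=
  {u | u ≠ T.root ∧ ∃ n : ℕ, T.parent^[n] v = u}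

/-- The number of edges of the tree. -/
def edgeCount (T : RTree V) : ℕ := Fintype.card V - 1

/-- The depth of a vertex: the number of edges on the path from the root to it. -/
noncomputable def depthV (T : RTree V) (v : V) : ℕ :=
  sInf {n : ℕ | T.parent^[n] v = T.root}

/-- The depth of the tree: the maximum number of edges on a path from the root to a leaf. -/
noncomputable def depth (T : RTree V) : ℕ :=
  Finset.univ.sup T.depthV

/-- The descendants of a vertex `u` (including `u` itself). -/
def desc (T : RTree V) (u : V) : Set V := {w | ∃ n : ℕ, T.parent^[n] w = u}

/-- The number of children of a vertex. -/
noncomputable def childCount (T : RTree V) (u : V) : ℕ :=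
  {w : V | T.parent w = u ∧ w ≠ u}.ncard

/-- A rooted tree is a rooted path if every vertex has at most one child. -/
def IsRootedPath (T : RTree V) : Prop := ∀ u : V, T.childCount u ≤ 1

/-- `a` is a strict ancestor of `v`. -/
def IsStrictAncestor (T : RTree V) (a v : V) : Prop :=
  a ≠ v ∧ ∃ n : ℕ, T.parent^[n] v = a

/-- A branch of `T` consists of a vertex `u`, exactly one child `u'` of `u` and all
descendants of `u'`; it is hence determined by the non-root vertex `u'` and denoted
here by `u'`.  Its root is `parent u'`, its vertex set is `{parent u'} ∪ desc u'`, and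
its edge number `‖S‖` is `(desc u').ncard`.  The branch determined by `u'` is primary
if its root has at least two children and every (strict) ancestor of its root has
exactly one child. -/
def IsPrimaryBranch (T : RTree V) (u' : V) : Prop :=
  u' ≠ T.root ∧ 2 ≤ T.childCount (T.parent u') ∧
    ∀ a : V, T.IsStrictAncestor a (T.parent u') → T.childCount a = 1

end RTree

/-- `(T, f)` is a depth-decomposition of the matroid on ground set `X` with rank
function `rk` and rank `r`: `f` maps elements of the matroid to leaves of `T`, the
number of edges of `T` equals the rank `r` of the matroid, and the rank of every
`X' ⊆ X` is at most the number of edges contained in the union of the paths in `T`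
from the root to the vertices `f x`, `x ∈ X'`. -/
def IsDepthDecompOn {X V : Type} [Fintype V] [DecidableEq V]
    (rk : Set X → ℕ) (r : ℕ) (T : RTree V) (f : X → V) : Prop :=
  (∀ x : X, T.IsLeaf (f x)) ∧ T.edgeCount = r ∧
    ∀ X' : Set X, rk X' ≤ (⋃ x ∈ X', T.pathEdges (f x)).ncard

/-- The branch-depth of the matroid on ground set `X` with rank function `rk` and
rank `r`: the smallest depth of a rooted tree forming a depth-decomposition. -/
noncomputable def branchDepth {X : Type} (rk : Set X → ℕ) (r : ℕ) : ℕ :=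
  sInf {d : ℕ | ∃ (nV : ℕ) (T : RTree (Fin (nV + 1))) (f : X → Fin (nV + 1)),
    IsDepthDecompOn rk r T f ∧ T.depth = d}

/-- The branch of `T` determined by the non-root vertex `u'` is at capacity: the rank
of the set `Ŝ` of matroid elements mapped by `f` to the leaves of the branch equals the
number `‖S‖` of edges of the branch plus the number of edges on the path from the root
of `T` to the root of the branch. -/
def AtCapacity {X V : Type} [Fintype V] [DecidableEq V]
    (rk : Set X → ℕ) (T : RTree V) (f : X → V) (u' : V) : Prop :=
  rk {x | f x ∈ T.desc u'} = (T.desc u').ncard + T.depthV (T.parent u')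

/-- The rank function of the vector matroid formed by the family of vectors `v`:
the rank of a subset is the dimension of its linear hull. -/
noncomputable def vecRk (F : Type) {W ι : Type} [Field F] [AddCommGroup W] [Module F W]
    (v : ι → W) (S : Set ι) : ℕ :=
  Module.finrank F (Submodule.span F (v '' S))

/-- `(T, f, g)` is an extended depth-decomposition of the vector matroid formed by the
family of vectors `v`: `(T, f)` is a depth-decomposition, the images under `g` of the
non-root vertices of `T` form a basis of the linear hull of the vectors, and every
vector `v x` lies in the linear hull of the `g`-image of the non-root vertices on the
path from `f x` to the root. -/
def IsExtDepthDecomp (F : Type) {W ι V : Type} [Field F] [AddCommGroup W] [Module F W]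
    [Fintype V] [DecidableEq V] (v : ι → W) (T : RTree V) (f : ι → V) (g : V → W) : Prop :=
  IsDepthDecompOn (vecRk F v) (vecRk F v Set.univ) T f ∧
  LinearIndependent F (fun u : {u : V // u ≠ T.root} => g u.val) ∧
  Submodule.span F (g '' {u : V | u ≠ T.root}) = Submodule.span F (Set.range v) ∧
  ∀ x : ι, v x ∈ Submodule.span F (g '' T.pathEdges (f x))

/-- The rank function of the vector matroid formed by the columns of a matrix `A`. -/
noncomputable def matRk {F : Type} [Field F] {m n : ℕ} (A : Matrix (Fin m) (Fin n) F)
    (S : Set (Fin n)) : ℕ :=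
  vecRk F (fun j => A.transpose j) S

/-- The branch-depth of a matrix `A`: the branch-depth of the vector matroid formed by
the columns of `A`. -/
noncomputable def matBranchDepth {F : Type} [Field F] {m n : ℕ}
    (A : Matrix (Fin m) (Fin n) F) : ℕ :=
  branchDepth (matRk A) (matRk A Set.univ)

/-- The dual graph of a matrix `A`: vertices are the rows of `A`, two distinct rows
being adjacent if some column of `A` has a non-zero entry in both of them. -/
def dualGraph {F : Type} [Field F] {m n : ℕ} (A : Matrix (Fin m) (Fin n) F) :
    SimpleGraph (Fin m) where
  Adj i i' := i ≠ i' ∧ ∃ j : Fin n, A i j ≠ 0 ∧ A i' j ≠ 0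
  symm := ⟨by
    rintro i i' ⟨h1, j, h2, h3⟩
    exact ⟨h1.symm, j, h3, h2⟩⟩
  loopless := ⟨fun i h => h.1 rfl⟩

/-- A rooted forest on a finite vertex type `V`, given by its parent function: the roots
are the fixed points of the parent function, and iterating the parent function from any
vertex reaches a root. -/
structure RForest (V : Type) [Fintype V] [DecidableEq V] where
  parent : V → V
  reach : ∀ v : V, ∃ n : ℕ, parent (parent^[n] v) = parent^[n] v

namespace RForest

variable {V : Type} [Fintype V] [DecidableEq V]

/-- The depth of a vertex: the number of edges on the path from the root of its tree. -/
noncomputable def depthV (Fo : RForest V) (v : V) : ℕ :=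
  sInf {n : ℕ | Fo.parent (Fo.parent^[n] v) = Fo.parent^[n] v}

/-- The height of a rooted forest: the maximum number of vertices on a path from a root
to a leaf. -/
noncomputable def height (Fo : RForest V) : ℕ :=
  Finset.univ.sup fun v => Fo.depthV v + 1

/-- The closure of the rooted forest `Fo` (obtained by adding edges from each vertex to
all its descendants) contains the graph `G` as a subgraph. -/
def ClosureContains (Fo : RForest V) (G : SimpleGraph V) : Prop :=
  ∀ u v : V, G.Adj u v → (∃ n : ℕ, Fo.parent^[n] v = u) ∨ (∃ n : ℕ, Fo.parent^[n] u = v)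

end RForest

/-- The tree-depth of a graph `G`: the minimum height of a rooted forest whose closure
contains `G` as a subgraph. -/
noncomputable def treeDepth {V : Type} [Fintype V] [DecidableEq V] (G : SimpleGraph V) : ℕ :=
  sInf {h : ℕ | ∃ Fo : RForest V, Fo.ClosureContains G ∧ Fo.height = h}

/-! Since the `g`-images of the non-root vertices of `T` form the basis `w`, the rows of `A'`
correspond to the non-root vertices of `T`, and the support of column `j` of `A'` lies on the
path from `f j` to the root. Two rows sharing a column are therefore comparable in `T`, so `T`
with its root deleted is a forest on the rows whose closure contains the dual graph; its height
is at most the depth of `T`. -/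

theorem Function.Injective.exists_equiv_of_range_eq {α β γ : Type*} {a : α → γ} {b : β → γ}
    (ha : a.Injective) (hb : b.Injective) (h : Set.range a = Set.range b) :
    ∃ e : α ≃ β, ∀ x, b (e x) = a x :=
  ⟨(Equiv.ofInjective a ha).trans ((Equiv.setCongr h).trans (Equiv.ofInjective b hb).symm),
    fun x => by simp [Equiv.apply_ofInjective_symm]⟩

theorem Matrix.span_range_transpose_eq_top_of_rank_eq {F ι κ : Type*} [Field F] [Fintype ι]
    [Fintype κ] {A : Matrix ι κ F} (hA : A.rank = Fintype.card ι) :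
    Submodule.span F (Set.range A.transpose) = ⊤ :=
  Submodule.eq_top_of_finrank_eq <| by
    rw [Module.finrank_fintype_fun_eq_card, ← hA, A.rank_eq_finrank_span_cols]
    rfl

theorem Module.Basis.mem_of_repr_ne_zero_of_mem_span_image {R ι β M : Type*} [Semiring R]
    [AddCommMonoid M] [Module R M] (b : Module.Basis ι R M) {e : ι → β} {g : β → M}
    (hbe : ∀ i, b i = g (e i)) {s : Set β} (hs : s ⊆ Set.range e) {v : M}
    (hv : v ∈ Submodule.span R (g '' s)) {i : ι} (hi : b.repr v i ≠ 0) : e i ∈ s := by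
  have hsub : g '' s ⊆ b '' (e ⁻¹' s) := by
    rintro _ ⟨_, hx, rfl⟩
    obtain ⟨j, rfl⟩ := hs hx
    exact ⟨j, hx, hbe j⟩
  exact b.mem_span_image.mp (Submodule.span_mono hsub hv) (Finsupp.mem_support_iff.mpr hi)

namespace RTree

variable {V : Type} [Fintype V] [DecidableEq V] (T : RTree V)

theorem iterate_parent_depthV (v : V) : T.parent^[T.depthV v] v = T.root :=
  Nat.sInf_mem (T.reach v)

theorem iterate_parent_ne_root_of_lt_depthV {v : V} {k : ℕ} (hk : k < T.depthV v) :
    T.parent^[k] v ≠ T.root :=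
  Nat.notMem_of_lt_sInf hk

theorem depthV_pos {v : V} (hv : v ≠ T.root) : 0 < T.depthV v :=
  Nat.pos_of_ne_zero fun h => hv (by simpa [h] using T.iterate_parent_depthV v)

theorem depthV_le_depth (v : V) : T.depthV v ≤ T.depth :=
  Finset.le_sup (Finset.mem_univ v)

theorem mem_pathEdges_comparable {v u u' : V} (hu : u ∈ T.pathEdges v)
    (hu' : u' ∈ T.pathEdges v) :
    (∃ k, T.parent^[k] u = u') ∨ ∃ k, T.parent^[k] u' = u := by
  obtain ⟨-, a, rfl⟩ := hu
  obtain ⟨-, c, rfl⟩ := hu'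
  rcases le_total a c with hac | hca
  · exact .inl ⟨c - a, by rw [← Function.iterate_add_apply, Nat.sub_add_cancel hac]⟩
  · exact .inr ⟨a - c, by rw [← Function.iterate_add_apply, Nat.sub_add_cancel hca]⟩

section Forest

variable {ι : Type} (e : ι ≃ {u : V // u ≠ T.root})

/-- The parent function of `T` with its root deleted, transported to `ι` along `e`; the children
of the root become roots. -/
def forestParent (i : ι) : ι :=
  if h : T.parent (e i) = T.root then i else e.symm ⟨T.parent (e i), h⟩

theorem coe_forestParent_iterate {k : ℕ} {i : ι} (hk : T.parent^[k] (e i) ≠ T.root) :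
    (e ((T.forestParent e)^[k] i) : V) = T.parent^[k] (e i) := by
  induction k with
  | zero => rfl
  | succ k ih =>
    have hk' : T.parent^[k] (e i) ≠ T.root := fun h =>
      hk (by rw [Function.iterate_succ_apply', h, T.parent_root])
    rw [Function.iterate_succ_apply', ← ih hk'] at hk
    rw [Function.iterate_succ_apply', Function.iterate_succ_apply', ← ih hk', forestParent,
      dif_neg hk, Equiv.apply_symm_apply]

theorem forestParent_iterate_eq {k : ℕ} {i i' : ι} (h : T.parent^[k] (e i) = e i') :
    (T.forestParent e)^[k] i = i' :=
  e.injective <| Subtype.ext <|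
    (T.coe_forestParent_iterate e (by rw [h]; exact (e i').2)).trans h

theorem forestParent_iterate_depthV_pred (i : ι) :
    T.forestParent e ((T.forestParent e)^[T.depthV (e i) - 1] i) =
      (T.forestParent e)^[T.depthV (e i) - 1] i := by
  have hpos := T.depthV_pos (e i).2
  have hne := T.iterate_parent_ne_root_of_lt_depthV (Nat.sub_lt hpos one_pos)
  have hroot := T.iterate_parent_depthV (e i)
  rw [← Nat.sub_add_cancel (Nat.one_le_of_lt hpos), Function.iterate_succ_apply',
    ← T.coe_forestParent_iterate e hne] at hroot
  exact dif_pos hroot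

variable [Fintype ι] [DecidableEq ι]

def toForest : RForest ι :=
  ⟨T.forestParent e, fun i => ⟨_, T.forestParent_iterate_depthV_pred e i⟩⟩

theorem height_toForest_le : (T.toForest e).height ≤ T.depth :=
  Finset.sup_le fun i _ => by
    have hi : (T.toForest e).depthV i ≤ T.depthV (e i) - 1 :=
      Nat.sInf_le (T.forestParent_iterate_depthV_pred e i)
    have := T.depthV_le_depth (e i)
    have := T.depthV_pos (e i).2
    show _ + 1 ≤ _
    omega

theorem toForest_closureContains {G : SimpleGraph ι}
    (hG : ∀ i i', G.Adj i i' →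
      (∃ k, T.parent^[k] (e i') = e i) ∨ ∃ k, T.parent^[k] (e i) = e i') :
    (T.toForest e).ClosureContains G := fun i i' hii' =>
  (hG i i' hii').imp (Exists.imp fun _ => T.forestParent_iterate_eq e)
    (Exists.imp fun _ => T.forestParent_iterate_eq e)

theorem treeDepth_le_depth_of_adj_comparable {G : SimpleGraph ι}
    (hG : ∀ i i', G.Adj i i' →
      (∃ k, T.parent^[k] (e i') = e i) ∨ ∃ k, T.parent^[k] (e i) = e i') :
    treeDepth G ≤ T.depth := by
  refine le_trans (Nat.sInf_le ?_) (T.height_toForest_le e)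
  exact ⟨T.toForest e, T.toForest_closureContains e hG, rfl⟩

end Forest

end RTree

theorem treeDepth_dualGraph_le_depth {F : Type} [Field F] {m n : ℕ} {V : Type} [Fintype V]
    [DecidableEq V] (T : RTree V) (f : Fin n → V) (e : Fin m ≃ {u : V // u ≠ T.root})
    {A' : Matrix (Fin m) (Fin n) F} (hA' : ∀ i j, A' i j ≠ 0 → (e i : V) ∈ T.pathEdges (f j)) :
    treeDepth (dualGraph A') ≤ T.depth :=
  T.treeDepth_le_depth_of_adj_comparable e fun _ _ hadj => by
    obtain ⟨-, j, hij, hi'j⟩ := hadj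
    exact T.mem_pathEdges_comparable (hA' _ j hi'j) (hA' _ j hij)

/-- Theorem: change of basis along an extended depth-decomposition.
Let `A` be an `m × n` matrix of rank `m` over a field, let `M` be the vector matroid
formed by the columns of `A` and let `(T, f, g)` be an extended depth-decomposition of
`M` with `Im(g) = {w 0, …, w (m-1)}`.  Then the `m × n` matrix `A'` expressing each
column of `A` in the basis `w` has dual tree-depth at most the depth of `T`. -/
theorem dual_treeDepth_le_depth_of_extDepthDecomp (F : Type) [Field F] (m n : ℕ)
    (A : Matrix (Fin m) (Fin n) F) (hA : A.rank = m)
    {V : Type} [Fintype V] [DecidableEq V]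
    (T : RTree V) (f : Fin n → V) (g : V → (Fin m → F))
    (hext : IsExtDepthDecomp F (fun j => A.transpose j) T f g)
    (w : Fin m → (Fin m → F)) (hw : g '' {u : V | u ≠ T.root} = Set.range w)
    (A' : Matrix (Fin m) (Fin n) F)
    (hA' : ∀ j : Fin n, (fun i => A i j) = ∑ i : Fin m, A' i j • w i) :
    treeDepth (dualGraph A') ≤ T.depth := by
  obtain ⟨-, hg_li, hg_span, hpath⟩ := hext
  have hw_top : ⊤ ≤ Submodule.span F (Set.range w) := by
    rw [← hw, hg_span, Matrix.span_range_transpose_eq_top_of_rank_eq (by simpa using hA)]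
  have hw_li : LinearIndependent F w :=
    linearIndependent_of_top_le_span_of_card_eq_finrank hw_top (by simp)
  let b := Module.Basis.mk hw_li hw_top
  obtain ⟨e, he⟩ := hw_li.injective.exists_equiv_of_range_eq hg_li.injective
    (hw.symm.trans (Set.image_eq_range _ _))
  refine treeDepth_dualGraph_le_depth T f e fun i j hij => ?_
  have hcoord : b.repr (A.transpose j) = fun i => A' i j := by
    have hcol : A.transpose j = ∑ i, A' i j • b i := by
      simp only [b, Module.Basis.mk_apply]
      exact hA' j
    rw [hcol, b.repr_sum_self]
  refine b.mem_of_repr_ne_zero_of_mem_span_image (e := fun i => (e i : V)) (fun i => ?_) ?_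
    (hpath j) (by rwa [hcoord])
  · simp [b, he]
  · rintro u ⟨hu, -⟩
    exact ⟨e.symm ⟨u, hu⟩, by simp⟩
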